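/- Let e_α := (−sin α, cos α), J(x,y) = (−y,x), let p : ℝ → ℝ be a C² function, and define γ(α) := p'(α)e_α − p(α)Je_α. Then 2∬_{[0,π]²} ω(γ'(α₁),γ'(α₂))² dα₁dα₂ = (∫₀^π (p''(α)+p(α))² dα)² − (∫₀^π (p''(α)+p(α))² cos(2α) dα)² − (∫₀^π (p''(α)+p(α))² sin(2α) dα)². -/

import Mathlib

open Real

/-- The standard area form (determinant) on `ℝ²`. -/
def omega2 (u v : ℝ × ℝ) : ℝ := u.1 * v.2 - u.2 * v.1

/-- The unit vector forming an angle `α` with the vertical direction `(0,1)`. -/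
noncomputable def eVec (α : ℝ) : ℝ × ℝ := (-Real.sin α, Real.cos α)

/-- Rotation by `π/2` in the positive direction. -/
def Jrot (v : ℝ × ℝ) : ℝ × ℝ := (-v.2, v.1)

/-!
Since `e' = J e` and `(J e)' = -e`, the terms `p' J e` cancel in `γ'`, leaving
`γ' = (p'' + p) e`. Then `ω(γ'(α₁), γ'(α₂)) = q(α₁) q(α₂) sin(α₂ - α₁)` with
`q = p'' + p`, and `2 sin²(α₂ - α₁) = 1 - cos 2α₁ cos 2α₂ - sin 2α₁ sin 2α₂` splits the
double integral into a difference of squares of single integrals.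
-/

theorem hasDerivAt_eVec (α : ℝ) : HasDerivAt eVec (Jrot (eVec α)) α :=
  (Real.hasDerivAt_sin α).neg.prodMk (Real.hasDerivAt_cos α)

theorem hasDerivAt_Jrot_eVec (α : ℝ) : HasDerivAt (fun α => Jrot (eVec α)) (-eVec α) α :=
  ((Real.hasDerivAt_cos α).neg.prodMk (Real.hasDerivAt_sin α).neg).congr_deriv
    (by simp [eVec])

theorem hasDerivAt_smul_eVec_sub_smul_Jrot_eVec {p p' : ℝ → ℝ} {α p'' : ℝ}
    (hp : HasDerivAt p (p' α) α) (hp' : HasDerivAt p' p'' α) :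
    HasDerivAt (fun α => p' α • eVec α - p α • Jrot (eVec α))
      ((p'' + p α) • eVec α) α := by
  refine ((hp'.smul (hasDerivAt_eVec α)).sub (hp.smul (hasDerivAt_Jrot_eVec α))).congr_deriv ?_
  module

theorem omega2_smul_smul (a b : ℝ) (u v : ℝ × ℝ) :
    omega2 (a • u) (b • v) = a * b * omega2 u v := by
  simp only [omega2, Prod.smul_fst, Prod.smul_snd, smul_eq_mul]
  ring

theorem omega2_eVec (s t : ℝ) : omega2 (eVec s) (eVec t) = Real.sin (t - s) := by
  rw [omega2, eVec, eVec, Real.sin_sub]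
  ring

theorem two_mul_omega2_smul_eVec_sq (a b s t : ℝ) :
    2 * omega2 (a • eVec s) (b • eVec t) ^ 2 =
      a ^ 2 * b ^ 2 - a ^ 2 * Real.cos (2 * s) * (b ^ 2 * Real.cos (2 * t)) -
        a ^ 2 * Real.sin (2 * s) * (b ^ 2 * Real.sin (2 * t)) := by
  have hsin : 2 * Real.sin (t - s) ^ 2 =
      1 - Real.cos (2 * s) * Real.cos (2 * t) - Real.sin (2 * s) * Real.sin (2 * t) := by
    have hcos := Real.cos_sub (2 * t) (2 * s)
    rw [← mul_sub, Real.cos_two_mul] at hcos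
    linear_combination -hcos + 2 * Real.sin_sq_add_cos_sq (t - s)
  rw [omega2_smul_smul, omega2_eVec]
  linear_combination a ^ 2 * b ^ 2 * hsin

theorem intervalIntegral.integral_integral_mul_sub_mul_sub_mul {f g h : ℝ → ℝ} {a b : ℝ}
    (hf : IntervalIntegrable f MeasureTheory.volume a b)
    (hg : IntervalIntegrable g MeasureTheory.volume a b)
    (hh : IntervalIntegrable h MeasureTheory.volume a b) :
    ∫ x in a..b, ∫ y in a..b, (f x * f y - g x * g y - h x * h y) =
      (∫ x in a..b, f x) ^ 2 - (∫ x in a..b, g x) ^ 2 - (∫ x in a..b, h x) ^ 2 := by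
  have inner (x : ℝ) : ∫ y in a..b, (f x * f y - g x * g y - h x * h y) =
      f x * (∫ y in a..b, f y) - g x * (∫ y in a..b, g y) - h x * ∫ y in a..b, h y := by
    rw [integral_sub ((hf.const_mul _).sub (hg.const_mul _)) (hh.const_mul _),
      integral_sub (hf.const_mul _) (hg.const_mul _),
      integral_const_mul, integral_const_mul, integral_const_mul]
  simp_rw [inner]
  rw [integral_sub ((hf.mul_const _).sub (hg.mul_const _)) (hh.mul_const _),
    integral_sub (hf.mul_const _) (hg.mul_const _),
    integral_mul_const, integral_mul_const, integral_mul_const]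
  ring

theorem stmt_11 (p : ℝ → ℝ) (hp : ContDiff ℝ 2 p)
    (γ : ℝ → ℝ × ℝ)
    (hγ : ∀ α : ℝ, γ α = deriv p α • eVec α - p α • Jrot (eVec α)) :
    2 * (∫ α₁ in (0:ℝ)..π, ∫ α₂ in (0:ℝ)..π,
        (omega2 (deriv γ α₁) (deriv γ α₂)) ^ 2) =
      (∫ α in (0:ℝ)..π, (deriv (deriv p) α + p α) ^ 2) ^ 2 -
      (∫ α in (0:ℝ)..π, (deriv (deriv p) α + p α) ^ 2 * Real.cos (2 * α)) ^ 2 -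
      (∫ α in (0:ℝ)..π, (deriv (deriv p) α + p α) ^ 2 * Real.sin (2 * α)) ^ 2 := by
  have hp' : ContDiff ℝ 1 (deriv p) := hp.deriv'
  set q : ℝ → ℝ := fun α => deriv (deriv p) α + p α
  have hq : Continuous fun α => q α ^ 2 := ((hp'.continuous_deriv le_rfl).add hp.continuous).pow 2
  have hγ' (α : ℝ) : deriv γ α = q α • eVec α := by
    rw [funext hγ]
    exact (hasDerivAt_smul_eVec_sub_smul_Jrot_eVec
      ((hp.differentiable two_ne_zero) α).hasDerivAt
      ((hp'.differentiable one_ne_zero) α).hasDerivAt).deriv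
  rw [← intervalIntegral.integral_const_mul]
  simp_rw [← intervalIntegral.integral_const_mul, hγ', two_mul_omega2_smul_eVec_sq]
  exact intervalIntegral.integral_integral_mul_sub_mul_sub_mul (hq.intervalIntegrable _ _)
    ((hq.mul (by fun_prop)).intervalIntegrable _ _) ((hq.mul (by fun_prop)).intervalIntegrable _ _)
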